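/- arXiv:2605.08274 — 12 statements merged into one kernel-verified Lean document; each statement's English description precedes it below -/
import Mathlib

section
/- Let (X, ≤) be a partially ordered set, let f : X → X be progressive, let x₀ ∈ X, and let Y and Y' be Bourbaki f-towers based at x₀. Then one of Y and Y' is an initial segment of the other. -/
/-- `Y` is well-ordered by the induced order: the order is total on `Y`
and every nonempty subset of `Y` has a least element. -/
def IsWOSubset {X : Type*} [PartialOrder X] (Y : Set X) : Prop :=
  (∀ a ∈ Y, ∀ b ∈ Y, a ≤ b ∨ b ≤ a) ∧
  (∀ S : Set X, S ⊆ Y → S.Nonempty → ∃ m, IsLeast S m)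

/-- The initial segment of `Y` determined by `y`. -/
def IS {X : Type*} [PartialOrder X] (Y : Set X) (y : X) : Set X := {z ∈ Y | z < y}

/-- The weak initial segment of `Y` determined by `y`. -/
def WIS {X : Type*} [PartialOrder X] (Y : Set X) (y : X) : Set X := {z ∈ Y | z ≤ y}

/-- `y` is a successor element of `Y`: it is the least element of
`{w ∈ Y | z < w}` for some `z ∈ Y`. -/
def IsSuccElem {X : Type*} [PartialOrder X] (Y : Set X) (y : X) : Prop :=
  ∃ z ∈ Y, IsLeast {w ∈ Y | z < w} y

/-- `y` is a limit element of `Y`: it belongs to `Y`, is not the least element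
of `Y`, and is not a successor element of `Y`. -/
def IsLimitElem {X : Type*} [PartialOrder X] (Y : Set X) (y : X) : Prop :=
  y ∈ Y ∧ ¬ IsLeast Y y ∧ ¬ IsSuccElem Y y

/-- `A` is an initial segment of `B`. -/
def IsInitialSegOf {X : Type*} [PartialOrder X] (A B : Set X) : Prop :=
  A ⊆ B ∧ ∀ a ∈ A, ∀ b ∈ B, b < a → b ∈ A

/-- `f` is progressive: `x ≤ f x` for all `x`. -/
def Progressive {X : Type*} [PartialOrder X] (f : X → X) : Prop := ∀ x, x ≤ f x

/-- `Y` is a Bourbaki `f`-tower based at `x₀`. -/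
def BourbakiTower {X : Type*} [PartialOrder X] (f : X → X) (x₀ : X) (Y : Set X) : Prop :=
  IsWOSubset Y ∧ IsLeast Y x₀ ∧
  (∀ y ∈ Y, ¬ IsGreatest Y y → IsLeast {z ∈ Y | y < z} (f y)) ∧
  (∀ y, IsLimitElem Y y → IsLUB (IS Y y) y)


section Aux
variable {X : Type*} [PartialOrder X]

lemma wis_single (Y : Set X) (x₀ : X) (h : IsLeast Y x₀) : WIS Y x₀ = {x₀} := by
  ext z
  simp only [WIS, Set.mem_setOf_eq, Set.mem_singleton_iff]
  constructor
  · rintro ⟨hz, hle⟩; exact le_antisymm hle (h.2 hz)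
  · rintro rfl; exact ⟨h.1, le_refl _⟩

lemma aux_init (Y Y' : Set X) (y b : X) (hyY' : y ∈ Y')
    (hw : WIS Y y = WIS Y' y) (hb : b ∈ Y) (hlt : b < y) :
    b ∈ Y' ∧ WIS Y b = WIS Y' b := by
  have hbw : b ∈ WIS Y' y := by rw [← hw]; exact ⟨hb, hlt.le⟩
  refine ⟨hbw.1, ?_⟩
  ext z
  simp only [WIS, Set.mem_setOf_eq]
  constructor
  · rintro ⟨hz, hle⟩
    have h1 : z ∈ WIS Y' y := by rw [← hw]; exact ⟨hz, hle.trans hlt.le⟩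
    exact ⟨h1.1, hle⟩
  · rintro ⟨hz, hle⟩
    have h1 : z ∈ WIS Y y := by
      rw [hw]; exact ⟨hz, hle.trans hlt.le⟩
    exact ⟨h1.1, hle⟩

lemma aux_E_eq_IS (Y E : Set X) (m : X)
    (htot : ∀ a ∈ Y, ∀ b ∈ Y, a ≤ b ∨ b ≤ a)
    (hE : E ⊆ Y)
    (hEinit : ∀ y ∈ E, ∀ b ∈ Y, b < y → b ∈ E)
    (hm : IsLeast (Y \ E) m) : E = IS Y m := by
  ext z
  simp only [IS, Set.mem_setOf_eq]
  constructor
  · intro hz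
    refine ⟨hE hz, ?_⟩
    rcases htot z (hE hz) m hm.1.1 with h | h
    · rcases h.lt_or_eq with h | h
      · exact h
      · exact absurd (h ▸ hz) hm.1.2
    · rcases h.lt_or_eq with h | h
      · exact absurd (hEinit z hz m hm.1.1 h) hm.1.2
      · exact absurd (h.symm ▸ hz) hm.1.2
  · rintro ⟨hzY, hzm⟩
    by_contra hzE
    exact absurd (hm.2 ⟨hzY, hzE⟩) hzm.not_ge

lemma aux_succ (f : X → X) (Y E : Set X) (m g : X)
    (hsucc : ∀ y ∈ Y, ¬ IsGreatest Y y → IsLeast {z ∈ Y | y < z} (f y))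
    (hE : E ⊆ Y)
    (hm : IsLeast (Y \ E) m)
    (hEIS : E = IS Y m)
    (hg : IsGreatest E g) : m = f g := by
  have hgY : g ∈ Y := hE hg.1
  have hgm : g < m := by
    have : g ∈ IS Y m := by rw [← hEIS]; exact hg.1
    exact this.2
  have hng : ¬ IsGreatest Y g := fun h => absurd (h.2 hm.1.1) hgm.not_ge
  have h1 : IsLeast {z ∈ Y | g < z} m := by
    refine ⟨⟨hm.1.1, hgm⟩, ?_⟩
    rintro z ⟨hzY, hgz⟩
    by_cases hzE : z ∈ E
    · exact absurd (hg.2 hzE) hgz.not_ge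
    · exact hm.2 ⟨hzY, hzE⟩
  exact h1.unique (hsucc g hgY hng)

lemma aux_lim (Y E : Set X) (m x₀ : X)
    (htot : ∀ a ∈ Y, ∀ b ∈ Y, a ≤ b ∨ b ≤ a)
    (hlim : ∀ y, IsLimitElem Y y → IsLUB (IS Y y) y)
    (hE : E ⊆ Y)
    (hm : IsLeast (Y \ E) m)
    (hEIS : E = IS Y m)
    (hx₀ : x₀ ∈ E)
    (hng : ∀ z ∈ E, ∃ z' ∈ E, ¬ z' ≤ z) : IsLUB E m := by
  have hmY : m ∈ Y := hm.1.1
  have hx₀m : x₀ < m := by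
    have : x₀ ∈ IS Y m := by rw [← hEIS]; exact hx₀
    exact this.2
  have hnotleast : ¬ IsLeast Y m := fun h => absurd (h.2 (hE hx₀)) hx₀m.not_ge
  have hnotsucc : ¬ IsSuccElem Y m := by
    rintro ⟨z, hzY, hzm⟩
    have hzE : z ∈ E := by rw [hEIS]; exact ⟨hzY, hzm.1.2⟩
    obtain ⟨z', hz'E, hz'⟩ := hng z hzE
    have hz'Y : z' ∈ Y := hE hz'E
    have hzz' : z < z' := by
      rcases htot z hzY z' hz'Y with h | h
      · exact h.lt_of_ne (fun h' => hz' (le_of_eq h'.symm))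
      · exact absurd h hz'
    have h1 : m ≤ z' := hzm.2 ⟨hz'Y, hzz'⟩
    have h2 : z' < m := by
      have : z' ∈ IS Y m := by rw [← hEIS]; exact hz'E
      exact this.2
    exact absurd h1 h2.not_ge
  have h := hlim m ⟨hmY, hnotleast, hnotsucc⟩
  rwa [← hEIS] at h

lemma aux_wis (Y Y' E : Set X) (m : X) (hmY : m ∈ Y) (hmY' : m ∈ Y')
    (h1 : E = IS Y m) (h2 : E = IS Y' m) : WIS Y m = WIS Y' m := by
  ext z
  simp only [WIS, Set.mem_setOf_eq]
  constructor
  · rintro ⟨hz, hle⟩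
    rcases hle.lt_or_eq with h | h
    · have hE : z ∈ E := by rw [h1]; exact ⟨hz, h⟩
      rw [h2] at hE
      exact ⟨hE.1, hle⟩
    · exact ⟨h ▸ hmY', hle⟩
  · rintro ⟨hz, hle⟩
    rcases hle.lt_or_eq with h | h
    · have hE : z ∈ E := by rw [h2]; exact ⟨hz, h⟩
      rw [h1] at hE
      exact ⟨hE.1, hle⟩
    · exact ⟨h ▸ hmY, hle⟩

end Aux

theorem stmt0 {X : Type*} [PartialOrder X] (f : X → X) (hf : Progressive f) (x₀ : X)
    (Y Y' : Set X) (hY : BourbakiTower f x₀ Y) (hY' : BourbakiTower f x₀ Y') :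
    IsInitialSegOf Y Y' ∨ IsInitialSegOf Y' Y := by
  classical
  obtain ⟨⟨Ytot, Ywo⟩, Yleast, Ysucc, Ylim⟩ := hY
  obtain ⟨⟨Y'tot, Y'wo⟩, Y'least, Y'succ, Y'lim⟩ := hY'
  set E : Set X := {y | y ∈ Y ∧ y ∈ Y' ∧ WIS Y y = WIS Y' y} with hEdef
  have hmemE : ∀ y, y ∈ E ↔ y ∈ Y ∧ y ∈ Y' ∧ WIS Y y = WIS Y' y := fun y => Iff.rfl
  have hEY : E ⊆ Y := fun y hy => ((hmemE y).mp hy).1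
  have hEY' : E ⊆ Y' := fun y hy => ((hmemE y).mp hy).2.1
  have hx₀ : x₀ ∈ E := (hmemE x₀).mpr ⟨Yleast.1, Y'least.1,
    by rw [wis_single Y x₀ Yleast, wis_single Y' x₀ Y'least]⟩
  have hinitY : ∀ y ∈ E, ∀ b ∈ Y, b < y → b ∈ E := by
    intro y hy b hb hlt
    obtain ⟨hy1, hy2, hy3⟩ := (hmemE y).mp hy
    obtain ⟨h1, h2⟩ := aux_init Y Y' y b hy2 hy3 hb hlt
    exact (hmemE b).mpr ⟨hb, h1, h2⟩
  have hinitY' : ∀ y ∈ E, ∀ b ∈ Y', b < y → b ∈ E := by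
    intro y hy b hb hlt
    obtain ⟨hy1, hy2, hy3⟩ := (hmemE y).mp hy
    obtain ⟨h1, h2⟩ := aux_init Y' Y y b hy1 hy3.symm hb hlt
    exact (hmemE b).mpr ⟨h1, hb, h2.symm⟩
  by_cases hYE : ∀ y ∈ Y, y ∈ E
  · left
    refine ⟨fun y hy => hEY' (hYE y hy), ?_⟩
    intro a ha b hb hba
    have haE := (hmemE a).mp (hYE a ha)
    have hw : b ∈ WIS Y a := by rw [haE.2.2]; exact ⟨hb, hba.le⟩
    exact hw.1
  by_cases hY'E : ∀ y ∈ Y', y ∈ E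
  · right
    refine ⟨fun y hy => hEY (hY'E y hy), ?_⟩
    intro a ha b hb hba
    have haE := (hmemE a).mp (hY'E a ha)
    have hw : b ∈ WIS Y' a := by rw [← haE.2.2]; exact ⟨hb, hba.le⟩
    exact hw.1
  push_neg at hYE hY'E
  obtain ⟨y1, hy1Y, hy1E⟩ := hYE
  obtain ⟨y2, hy2Y', hy2E⟩ := hY'E
  obtain ⟨m, hm⟩ := Ywo (Y \ E) Set.diff_subset ⟨y1, hy1Y, hy1E⟩
  obtain ⟨m', hm'⟩ := Y'wo (Y' \ E) Set.diff_subset ⟨y2, hy2Y', hy2E⟩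
  have hEISm : E = IS Y m := aux_E_eq_IS Y E m Ytot hEY hinitY hm
  have hEISm' : E = IS Y' m' := aux_E_eq_IS Y' E m' Y'tot hEY' hinitY' hm'
  have heq : m = m' := by
    by_cases hg : ∃ g, IsGreatest E g
    · obtain ⟨g, hg⟩ := hg
      rw [aux_succ f Y E m g Ysucc hEY hm hEISm hg,
          aux_succ f Y' E m' g Y'succ hEY' hm' hEISm' hg]
    · push_neg at hg
      have hng : ∀ z ∈ E, ∃ z' ∈ E, ¬ z' ≤ z := by
        intro z hz
        by_contra h
        push_neg at h
        exact hg z ⟨hz, fun b hb => h b hb⟩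
      exact (aux_lim Y E m x₀ Ytot Ylim hEY hm hEISm hx₀ hng).unique
        (aux_lim Y' E m' x₀ Y'tot Y'lim hEY' hm' hEISm' hx₀ hng)
  subst heq
  exact absurd ((hmemE m).mpr ⟨hm.1.1, hm'.1.1,
    aux_wis Y Y' E m hm.1.1 hm'.1.1 hEISm hEISm'⟩) hm.1.2
end

section
/- Let (X, ≤) be a nonempty partially ordered set in which every nonempty well-ordered subset admits a least upper bound in X, let f : X → X be progressive, and let x₀ ∈ X. Then the union Ω of all Bourbaki f-towers based at x₀ is itself a Bourbaki f-tower based at x₀; in particular, it is the largest Bourbaki f-tower based at x₀ under inclusion. -/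
section Aux

variable {X : Type*} [PartialOrder X] {f : X → X} {x₀ : X}

/-- Comparability of two Bourbaki towers: each element of one is comparable
with each element of the other, and the smaller one lies in the other tower. -/
theorem tower_comp {A B : Set X}
    (hA : BourbakiTower f x₀ A) (hB : BourbakiTower f x₀ B) :
    ∀ a ∈ A, ∀ b ∈ B, (b ≤ a ∧ b ∈ A) ∨ (a ≤ b ∧ a ∈ B) := by
  classical
  obtain ⟨⟨hAtot, hAwo⟩, hAleast, hAsucc, hAlim⟩ := hA
  obtain ⟨⟨hBtot, hBwo⟩, hBleast, hBsucc, hBlim⟩ := hB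
  by_contra hcon
  have hSbad : {a ∈ A | ∃ b ∈ B, ¬ ((b ≤ a ∧ b ∈ A) ∨ (a ≤ b ∧ a ∈ B))}.Nonempty := by
    by_contra h
    apply hcon
    intro a ha b hb
    by_contra hq
    exact h ⟨a, ha, b, hb, hq⟩
  obtain ⟨a, haleast⟩ := hAwo _ (fun x hx => hx.1) hSbad
  obtain ⟨ha, b0, hb0, hP0⟩ := haleast.1
  have hTbad : {b ∈ B | ¬ ((b ≤ a ∧ b ∈ A) ∨ (a ≤ b ∧ a ∈ B))}.Nonempty := ⟨b0, hb0, hP0⟩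
  obtain ⟨b, hbleast⟩ := hBwo _ (fun x hx => hx.1) hTbad
  obtain ⟨hb, hPab⟩ := hbleast.1
  have IH1 : ∀ a' ∈ A, a' < a → ∀ b'' ∈ B,
      ((b'' ≤ a' ∧ b'' ∈ A) ∨ (a' ≤ b'' ∧ a' ∈ B)) := by
    intro a' ha' hlt b'' hb''
    by_contra hq
    exact absurd (haleast.2 ⟨ha', b'', hb'', hq⟩) (not_le_of_gt hlt)
  have IH2 : ∀ b' ∈ B, b' < b → ((b' ≤ a ∧ b' ∈ A) ∨ (a ≤ b' ∧ a ∈ B)) := by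
    intro b' hb' hlt
    by_contra hq
    exact absurd (hbleast.2 ⟨hb', hq⟩) (not_le_of_gt hlt)
  have H1 : ∀ a' ∈ A, a' < a → a' < b ∧ a' ∈ B := by
    intro a' ha' hlt
    rcases IH1 a' ha' hlt b hb with ⟨h1, h2⟩ | ⟨h1, h2⟩
    · exact absurd (Or.inl ⟨h1.trans hlt.le, h2⟩) hPab
    · rcases h1.lt_or_eq with h | h
      · exact ⟨h, h2⟩
      · subst h
        exact absurd (Or.inl ⟨hlt.le, ha'⟩) hPab
  have H2 : ∀ b' ∈ B, b' < b → b' < a ∧ b' ∈ A := by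
    intro b' hb' hlt
    rcases IH2 b' hb' hlt with ⟨h1, h2⟩ | ⟨h1, h2⟩
    · rcases h1.lt_or_eq with h | h
      · exact ⟨h, h2⟩
      · subst h
        exact absurd (Or.inr ⟨hlt.le, hb'⟩) hPab
    · exact absurd (Or.inr ⟨h1.trans hlt.le, h2⟩) hPab
  apply hPab
  by_cases hamin : IsLeast A a
  · have hax : a = x₀ := hamin.unique hAleast
    rw [hax]
    exact Or.inr ⟨hBleast.2 hb, hBleast.1⟩
  by_cases hbmin : IsLeast B b
  · have hbx : b = x₀ := hbmin.unique hBleast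
    rw [hbx]
    exact Or.inl ⟨hAleast.2 ha, hAleast.1⟩
  by_cases hasucc : IsSuccElem A a
  · obtain ⟨z, hz, hzleast⟩ := hasucc
    have hza : z < a := hzleast.1.2
    have hzB : z ∈ B := (H1 z hz hza).2
    have hzb : z < b := (H1 z hz hza).1
    have hfz : f z = a := by
      have hng : ¬ IsGreatest A z := fun hg => absurd (hg.2 ha) (not_le_of_gt hza)
      exact (hAsucc z hz hng).unique hzleast
    have hng' : ¬ IsGreatest B z := fun hg => absurd (hg.2 hb) (not_le_of_gt hzb)
    have hBz := hBsucc z hzB hng'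
    have h1 : f z ≤ b := hBz.2 ⟨hb, hzb⟩
    have h2 : f z ∈ B := hBz.1.1
    rw [hfz] at h1 h2
    exact Or.inr ⟨h1, h2⟩
  · have halim : IsLimitElem A a := ⟨ha, hamin, hasucc⟩
    have hlubA : IsLUB (IS A a) a := hAlim a halim
    have hseg : IS A a = IS B b := by
      ext z
      constructor
      · rintro ⟨hz, hlt⟩
        exact ⟨(H1 z hz hlt).2, (H1 z hz hlt).1⟩
      · rintro ⟨hz, hlt⟩
        exact ⟨(H2 z hz hlt).2, (H2 z hz hlt).1⟩
    by_cases hbsucc : IsSuccElem B b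
    · obtain ⟨z, hz, hzleast⟩ := hbsucc
      have hzb : z < b := hzleast.1.2
      have hzA : z ∈ A := (H2 z hz hzb).2
      have hza : z < a := (H2 z hz hzb).1
      have hfz : f z = b := by
        have hng : ¬ IsGreatest B z := fun hg => absurd (hg.2 hb) (not_le_of_gt hzb)
        exact (hBsucc z hz hng).unique hzleast
      have hng' : ¬ IsGreatest A z := fun hg => absurd (hg.2 ha) (not_le_of_gt hza)
      have hAz := hAsucc z hzA hng'
      have h1 : f z ≤ a := hAz.2 ⟨ha, hza⟩
      have h2 : f z ∈ A := hAz.1.1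
      rw [hfz] at h1 h2
      exact Or.inl ⟨h1, h2⟩
    · have hblim : IsLimitElem B b := ⟨hb, hbmin, hbsucc⟩
      have hlubB : IsLUB (IS B b) b := hBlim b hblim
      rw [hseg] at hlubA
      have hab : a = b := hlubA.unique hlubB
      exact Or.inr ⟨hab.le, hab ▸ hb⟩

theorem singleton_tower (f : X → X) (x₀ : X) : BourbakiTower f x₀ {x₀} := by
  have hle : IsLeast ({x₀} : Set X) x₀ :=
    ⟨rfl, fun y hy => (Set.mem_singleton_iff.mp hy).ge⟩
  refine ⟨⟨?_, ?_⟩, hle, ?_, ?_⟩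
  · intro a ha b hb
    rw [Set.mem_singleton_iff] at ha hb
    subst ha; subst hb
    exact Or.inl le_rfl
  · rintro S hS ⟨s, hs⟩
    have hsx : s = x₀ := hS hs
    subst hsx
    exact ⟨s, hs, fun t ht => (Set.mem_singleton_iff.mp (hS ht)).ge⟩
  · intro y hy hng
    exact absurd ⟨hy, fun z hz =>
      (Set.mem_singleton_iff.mp hz).trans_le (Set.mem_singleton_iff.mp hy).ge⟩ hng
  · intro y hylim
    exact absurd hle (Set.mem_singleton_iff.mp hylim.1 ▸ hylim.2.1)

end Aux

theorem stmt1 {X : Type*} [PartialOrder X] [Nonempty X]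
    (hlub : ∀ W : Set X, W.Nonempty → IsWOSubset W → ∃ u, IsLUB W u)
    (f : X → X) (hf : Progressive f) (x₀ : X) :
    BourbakiTower f x₀ (⋃₀ {Y : Set X | BourbakiTower f x₀ Y}) ∧
      ∀ Y : Set X, BourbakiTower f x₀ Y → Y ⊆ ⋃₀ {Y : Set X | BourbakiTower f x₀ Y} := by
  classical
  have hmem : ∀ y, y ∈ (⋃₀ {Y : Set X | BourbakiTower f x₀ Y}) ↔
      ∃ A, BourbakiTower f x₀ A ∧ y ∈ A := by
    intro y
    simp [Set.mem_sUnion]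
  set Ω := ⋃₀ {Y : Set X | BourbakiTower f x₀ Y} with hΩdef
  have hΩleast : IsLeast Ω x₀ := by
    refine ⟨(hmem x₀).mpr ⟨{x₀}, singleton_tower f x₀, rfl⟩, ?_⟩
    intro y hy
    obtain ⟨A, hA, hyA⟩ := (hmem y).mp hy
    exact hA.2.1.2 hyA
  have htot : ∀ a ∈ Ω, ∀ b ∈ Ω, a ≤ b ∨ b ≤ a := by
    intro a ha b hb
    obtain ⟨A, hA, haA⟩ := (hmem a).mp ha
    obtain ⟨B, hB, hbB⟩ := (hmem b).mp hb
    rcases tower_comp hA hB a haA b hbB with ⟨h, _⟩ | ⟨h, _⟩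
    · exact Or.inr h
    · exact Or.inl h
  have hwo : ∀ S : Set X, S ⊆ Ω → S.Nonempty → ∃ m, IsLeast S m := by
    rintro S hS ⟨s, hs⟩
    obtain ⟨A, hA, hsA⟩ := (hmem s).mp (hS hs)
    have hsub : {x ∈ S | x ≤ s} ⊆ A := by
      rintro x ⟨hxS, hxs⟩
      obtain ⟨Bx, hBx, hxB⟩ := (hmem x).mp (hS hxS)
      rcases tower_comp hA hBx s hsA x hxB with ⟨_, hxA⟩ | ⟨hle, _⟩
      · exact hxA
      · rw [le_antisymm hxs hle]
        exact hsA
    obtain ⟨m, hm⟩ := hA.1.2 _ hsub ⟨s, hs, le_refl s⟩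
    refine ⟨m, hm.1.1, ?_⟩
    intro y hy
    obtain ⟨By, hBy, hyB⟩ := (hmem y).mp (hS hy)
    rcases tower_comp hA hBy s hsA y hyB with ⟨hle, _⟩ | ⟨hle, _⟩
    · exact hm.2 ⟨hy, hle⟩
    · exact hm.1.2.trans hle
  have hsucc : ∀ y ∈ Ω, ¬ IsGreatest Ω y → IsLeast {z ∈ Ω | y < z} (f y) := by
    intro y hy hng
    obtain ⟨A, hA, hyA⟩ := (hmem y).mp hy
    have hex : ∃ B, BourbakiTower f x₀ B ∧ y ∈ B ∧ ¬ IsGreatest B y := by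
      by_cases hg : IsGreatest A y
      · have hz : ∃ z ∈ Ω, ¬ z ≤ y := by
          by_contra h
          push_neg at h
          exact hng ⟨hy, h⟩
        obtain ⟨z, hzΩ, hzy⟩ := hz
        obtain ⟨B, hB, hzB⟩ := (hmem z).mp hzΩ
        rcases tower_comp hA hB y hyA z hzB with ⟨h1, _⟩ | ⟨h1, h2⟩
        · exact absurd h1 hzy
        · exact ⟨B, hB, h2, fun hg' => hzy (hg'.2 hzB)⟩
      · exact ⟨A, hA, hyA, hg⟩
    obtain ⟨B, hB, hyB, hgB⟩ := hex
    have hfy := hB.2.2.1 y hyB hgB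
    constructor
    · exact ⟨(hmem _).mpr ⟨B, hB, hfy.1.1⟩, hfy.1.2⟩
    · rintro z ⟨hzΩ, hyz⟩
      obtain ⟨C, hC, hzC⟩ := (hmem z).mp hzΩ
      rcases tower_comp hB hC (f y) hfy.1.1 z hzC with ⟨_, h2⟩ | ⟨h1, _⟩
      · exact hfy.2 ⟨h2, hyz⟩
      · exact h1
  have hlim : ∀ y, IsLimitElem Ω y → IsLUB (IS Ω y) y := by
    rintro y ⟨hyΩ, hymin, hysucc⟩
    obtain ⟨A, hA, hyA⟩ := (hmem y).mp hyΩ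
    have hseg : IS Ω y = IS A y := by
      ext z
      constructor
      · rintro ⟨hzΩ, hzy⟩
        obtain ⟨B, hB, hzB⟩ := (hmem z).mp hzΩ
        rcases tower_comp hA hB y hyA z hzB with ⟨_, h2⟩ | ⟨h1, _⟩
        · exact ⟨h2, hzy⟩
        · exact absurd h1 (not_le_of_gt hzy)
      · rintro ⟨hzA, hzy⟩
        exact ⟨(hmem z).mpr ⟨A, hA, hzA⟩, hzy⟩
    have hAlim : IsLimitElem A y := by
      refine ⟨hyA, ?_, ?_⟩
      · intro hl
        have : y = x₀ := hl.unique hA.2.1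
        rw [this] at hymin
        exact hymin hΩleast
      · rintro ⟨z, hzA, hzleast⟩
        apply hysucc
        refine ⟨z, (hmem z).mpr ⟨A, hA, hzA⟩, ⟨hyΩ, hzleast.1.2⟩, ?_⟩
        rintro w ⟨hwΩ, hzw⟩
        obtain ⟨B, hB, hwB⟩ := (hmem w).mp hwΩ
        rcases tower_comp hA hB y hyA w hwB with ⟨_, h2⟩ | ⟨h1, _⟩
        · exact hzleast.2 ⟨h2, hzw⟩
        · exact h1
    rw [hseg]
    exact hA.2.2.2 y hAlim
  exact ⟨⟨⟨htot, hwo⟩, hΩleast, hsucc, hlim⟩, fun Y hY y hy => ⟨Y, hY, hy⟩⟩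
end

section
/- Let (X, ≤) be a partially ordered set, let f : X → X be progressive, let x₀ ∈ X, and let Y and Y' be Bourbaki f-towers based at x₀. Define V = {y ∈ Y ∩ Y' : WIS_Y(y) = WIS_{Y'}(y)}. Then x₀ ∈ V, and V is an initial segment of Y and also an initial segment of Y'. -/
theorem stmt6 {X : Type*} [PartialOrder X] (f : X → X) (hf : Progressive f) (x₀ : X)
    (Y Y' : Set X) (hY : BourbakiTower f x₀ Y) (hY' : BourbakiTower f x₀ Y') :
    x₀ ∈ {y ∈ Y ∩ Y' | WIS Y y = WIS Y' y} ∧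
      IsInitialSegOf {y ∈ Y ∩ Y' | WIS Y y = WIS Y' y} Y ∧
      IsInitialSegOf {y ∈ Y ∩ Y' | WIS Y y = WIS Y' y} Y' := by
  obtain ⟨hYwo, hYl, hYs, hYlim⟩ := hY
  obtain ⟨hY'wo, hY'l, hY's, hY'lim⟩ := hY'
  have hx0 : x₀ ∈ {y ∈ Y ∩ Y' | WIS Y y = WIS Y' y} := by
    refine ⟨⟨hYl.1, hY'l.1⟩, ?_⟩
    ext z
    constructor
    · rintro ⟨hz, hle⟩
      have : z = x₀ := le_antisymm hle (hYl.2 hz)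
      subst this; exact ⟨hY'l.1, le_refl _⟩
    · rintro ⟨hz, hle⟩
      have : z = x₀ := le_antisymm hle (hY'l.2 hz)
      subst this; exact ⟨hYl.1, le_refl _⟩
  -- key: if a ∈ V and b ≤ a with b ∈ Y (or Y'), then b ∈ V
  have key : ∀ a ∈ {y ∈ Y ∩ Y' | WIS Y y = WIS Y' y}, ∀ b, b ≤ a →
      (b ∈ Y ∨ b ∈ Y') → b ∈ {y ∈ Y ∩ Y' | WIS Y y = WIS Y' y} := by
    rintro a ⟨⟨haY, haY'⟩, hWa⟩ b hba hb
    have hbY : b ∈ Y ∧ b ∈ Y' := by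
      rcases hb with hb | hb
      · have : b ∈ WIS Y' a := hWa ▸ ⟨hb, hba⟩
        exact ⟨hb, this.1⟩
      · have : b ∈ WIS Y a := hWa.symm ▸ ⟨hb, hba⟩
        exact ⟨this.1, hb⟩
    refine ⟨hbY, ?_⟩
    ext z
    constructor
    · rintro ⟨hz, hle⟩
      have : z ∈ WIS Y' a := hWa ▸ ⟨hz, hle.trans hba⟩
      exact ⟨this.1, hle⟩
    · rintro ⟨hz, hle⟩
      have : z ∈ WIS Y a := hWa.symm ▸ ⟨hz, hle.trans hba⟩
      exact ⟨this.1, hle⟩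
  refine ⟨hx0, ⟨fun a ha => ha.1.1, fun a ha b hb hba => key a ha b hba.le (Or.inl hb)⟩,
    ⟨fun a ha => ha.1.2, fun a ha b hb hba => key a ha b hba.le (Or.inr hb)⟩⟩
end

section
/- Let (X, ≤) be a partially ordered set, let f : X → X be progressive, let x₀ ∈ X, and let Y and Y' be Bourbaki f-towers based at x₀. Define V = {y ∈ Y ∩ Y' : WIS_Y(y) = WIS_{Y'}(y)}. If v ∈ V is not the largest element of Y and not the largest element of Y', then f(v) ∈ V. -/
theorem stmt7 {X : Type*} [PartialOrder X] (f : X → X) (hf : Progressive f) (x₀ : X)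
    (Y Y' : Set X) (hY : BourbakiTower f x₀ Y) (hY' : BourbakiTower f x₀ Y')
    (v : X) (hv : v ∈ {y ∈ Y ∩ Y' | WIS Y y = WIS Y' y})
    (hvY : ¬ IsGreatest Y v) (hvY' : ¬ IsGreatest Y' v) :
    f v ∈ {y ∈ Y ∩ Y' | WIS Y y = WIS Y' y} := by
  obtain ⟨⟨hvYmem, hvY'mem⟩, hwis⟩ := hv
  have hL : IsLeast {z ∈ Y | v < z} (f v) := hY.2.2.1 v hvYmem hvY
  have hL' : IsLeast {z ∈ Y' | v < z} (f v) := hY'.2.2.1 v hvY'mem hvY'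
  have hfvY : f v ∈ Y := hL.1.1
  have hfvY' : f v ∈ Y' := hL'.1.1
  have hlt : v < f v := hL.1.2
  have key : ∀ (Z : Set X), v ∈ Z → f v ∈ Z → (∀ a ∈ Z, ∀ b ∈ Z, a ≤ b ∨ b ≤ a) →
      IsLeast {z ∈ Z | v < z} (f v) → WIS Z (f v) = WIS Z v ∪ {f v} := by
    intro Z hvZ hfZ htot hLZ
    ext z
    simp only [WIS, Set.mem_setOf_eq, Set.mem_union, Set.mem_singleton_iff]
    constructor
    · rintro ⟨hzZ, hzle⟩
      rcases htot z hzZ v hvZ with h | h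
      · exact Or.inl ⟨hzZ, h⟩
      · rcases eq_or_lt_of_le h with rfl | h
        · exact Or.inl ⟨hzZ, le_rfl⟩
        · exact Or.inr (le_antisymm hzle (hLZ.2 ⟨hzZ, h⟩))
    · rintro (⟨hzZ, hzle⟩ | rfl)
      · exact ⟨hzZ, hzle.trans hlt.le⟩
      · exact ⟨hfZ, le_refl _⟩
  refine ⟨⟨hfvY, hfvY'⟩, ?_⟩
  rw [key Y hvYmem hfvY hY.1.1 hL, key Y' hvY'mem hfvY' hY'.1.1 hL', hwis]
end

section
/- Let (X, ≤) be a partially ordered set, let f : X → X be progressive, let x₀ ∈ X, and let Y and Y' be Bourbaki f-towers based at x₀. Define V = {y ∈ Y ∩ Y' : WIS_Y(y) = WIS_{Y'}(y)}. If V has no largest element, then Y = V or Y' = V. -/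
private lemma tower_aux {X : Type*} [PartialOrder X] (f : X → X) (x₀ : X)
    (Y : Set X) (hY : BourbakiTower f x₀ Y) (V : Set X) (hVY : V ⊆ Y)
    (hx0 : x₀ ∈ V) (hfV : ∀ z ∈ V, f z ∈ V)
    (hseg : ∀ v ∈ V, ∀ b ∈ Y, b ≤ v → b ∈ V)
    (y : X) (hy : IsLeast (Y \ V) y) : IS Y y = V ∧ IsLUB V y := by
  obtain ⟨⟨hyY, hyV⟩, hymin⟩ := hy
  have hIS : IS Y y = V := by
    ext z
    constructor
    · rintro ⟨hzY, hzy⟩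
      by_contra hzV
      exact absurd (hymin ⟨hzY, hzV⟩) hzy.not_ge
    · intro hzV
      refine ⟨hVY hzV, ?_⟩
      rcases hY.1.1 z (hVY hzV) y hyY with h | h
      · exact lt_of_le_of_ne h (fun e => hyV (e ▸ hzV))
      · exact absurd (hseg z hzV y hyY h) hyV
  refine ⟨hIS, ?_⟩
  have hlim : IsLimitElem Y y := by
    refine ⟨hyY, ?_, ?_⟩
    · intro hl
      have heq : y = x₀ := le_antisymm (hl.2 (hVY hx0)) (hY.2.1.2 hyY)
      exact hyV (by rw [heq]; exact hx0)
    · rintro ⟨z, hzY, hls⟩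
      have hzy : z < y := hls.1.2
      have hzV : z ∈ V := hIS ▸ (⟨hzY, hzy⟩ : z ∈ IS Y y)
      have hng : ¬ IsGreatest Y z := fun hg => absurd (hg.2 hyY) hzy.not_ge
      have hfz := hY.2.2.1 z hzY hng
      have heq : y = f z := le_antisymm (hls.2 hfz.1) (hfz.2 hls.1)
      exact hyV (by rw [heq]; exact hfV z hzV)
  have h := hY.2.2.2 y hlim
  rwa [hIS] at h

theorem stmt8 {X : Type*} [PartialOrder X] (f : X → X) (hf : Progressive f) (x₀ : X)
    (Y Y' : Set X) (hY : BourbakiTower f x₀ Y) (hY' : BourbakiTower f x₀ Y')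
    (hnogreatest : ¬ ∃ v, IsGreatest {y ∈ Y ∩ Y' | WIS Y y = WIS Y' y} v) :
    Y = {y ∈ Y ∩ Y' | WIS Y y = WIS Y' y} ∨
      Y' = {y ∈ Y ∩ Y' | WIS Y y = WIS Y' y} := by
  set V := {y ∈ Y ∩ Y' | WIS Y y = WIS Y' y} with hVdef
  by_contra hcon
  push_neg at hcon
  obtain ⟨hne, hne'⟩ := hcon
  have hVY : V ⊆ Y := fun v hv => hv.1.1
  have hVY' : V ⊆ Y' := fun v hv => hv.1.2
  have hseg : ∀ v ∈ V, ∀ b ∈ Y, b ≤ v → b ∈ V := by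
    rintro v ⟨⟨hvY, hvY'⟩, hvw⟩ b hbY hbv
    have hbY' : b ∈ Y' := by
      have hm : b ∈ WIS Y v := ⟨hbY, hbv⟩
      rw [hvw] at hm; exact hm.1
    refine ⟨⟨hbY, hbY'⟩, ?_⟩
    ext z
    constructor
    · rintro ⟨hzY, hzb⟩
      have hz' : z ∈ WIS Y' v := by
        have hm : z ∈ WIS Y v := ⟨hzY, hzb.trans hbv⟩
        rwa [hvw] at hm
      exact ⟨hz'.1, hzb⟩
    · rintro ⟨hzY', hzb⟩
      have hz : z ∈ WIS Y v := by
        have hm : z ∈ WIS Y' v := ⟨hzY', hzb.trans hbv⟩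
        rwa [← hvw] at hm
      exact ⟨hz.1, hzb⟩
  have hseg' : ∀ v ∈ V, ∀ b ∈ Y', b ≤ v → b ∈ V := by
    rintro v ⟨⟨hvY, hvY'⟩, hvw⟩ b hbY' hbv
    have hbY : b ∈ Y := by
      have hm : b ∈ WIS Y' v := ⟨hbY', hbv⟩
      rw [← hvw] at hm; exact hm.1
    refine ⟨⟨hbY, hbY'⟩, ?_⟩
    ext z
    constructor
    · rintro ⟨hzY, hzb⟩
      have hz' : z ∈ WIS Y' v := by
        have hm : z ∈ WIS Y v := ⟨hzY, hzb.trans hbv⟩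
        rwa [hvw] at hm
      exact ⟨hz'.1, hzb⟩
    · rintro ⟨hzY', hzb⟩
      have hz : z ∈ WIS Y v := by
        have hm : z ∈ WIS Y' v := ⟨hzY', hzb.trans hbv⟩
        rwa [← hvw] at hm
      exact ⟨hz.1, hzb⟩
  have hfV : ∀ z ∈ V, f z ∈ V := by
    intro z hz
    have hng : ¬ IsGreatest V z := fun hg => hnogreatest ⟨z, hg⟩
    obtain ⟨w, hwV, hwz⟩ : ∃ w ∈ V, ¬ w ≤ z := by
      by_contra h; push_neg at h; exact hng ⟨hz, h⟩
    have hzw : z < w := by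
      rcases hY.1.1 z (hVY hz) w (hVY hwV) with h | h
      · exact lt_of_le_of_ne h (fun e => hwz (e ▸ le_refl z))
      · exact absurd h hwz
    have hngY : ¬ IsGreatest Y z := fun hg => absurd (hg.2 (hVY hwV)) hzw.not_ge
    have hfz := hY.2.2.1 z (hVY hz) hngY
    exact hseg w hwV (f z) hfz.1.1 (hfz.2 ⟨hVY hwV, hzw⟩)
  have hx0 : x₀ ∈ V := by
    refine ⟨⟨hY.2.1.1, hY'.2.1.1⟩, ?_⟩
    ext z
    constructor
    · rintro ⟨hzY, hz0⟩
      have hz : z = x₀ := le_antisymm hz0 (hY.2.1.2 hzY)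
      exact hz ▸ (⟨hY'.2.1.1, le_refl x₀⟩ : x₀ ∈ WIS Y' x₀)
    · rintro ⟨hzY', hz0⟩
      have hz : z = x₀ := le_antisymm hz0 (hY'.2.1.2 hzY')
      exact hz ▸ (⟨hY.2.1.1, le_refl x₀⟩ : x₀ ∈ WIS Y x₀)
  obtain ⟨y, hy⟩ := hY.1.2 (Y \ V) Set.diff_subset
    (Set.diff_nonempty.mpr fun h => hne (Set.Subset.antisymm h hVY))
  obtain ⟨y', hy'⟩ := hY'.1.2 (Y' \ V) Set.diff_subset
    (Set.diff_nonempty.mpr fun h => hne' (Set.Subset.antisymm h hVY'))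
  obtain ⟨hIS, hlub⟩ := tower_aux f x₀ Y hY V hVY hx0 hfV hseg y hy
  obtain ⟨hIS', hlub'⟩ := tower_aux f x₀ Y' hY' V hVY' hx0 hfV hseg' y' hy'
  have heq : y = y' := le_antisymm (hlub.2 hlub'.1) (hlub'.2 hlub.1)
  have hWIS : WIS Y y = WIS Y' y := by
    ext z
    constructor
    · rintro ⟨hzY, hzy⟩
      rcases eq_or_lt_of_le hzy with rfl | hlt
      · exact ⟨heq ▸ hy'.1.1, le_refl z⟩
      · have hzV : z ∈ V := hIS ▸ (⟨hzY, hlt⟩ : z ∈ IS Y y)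
        exact ⟨hVY' hzV, hzy⟩
    · rintro ⟨hzY', hzy⟩
      rcases eq_or_lt_of_le hzy with rfl | hlt
      · exact ⟨hy.1.1, le_refl z⟩
      · have hzV : z ∈ V := hIS' ▸ (⟨hzY', heq ▸ hlt⟩ : z ∈ IS Y' y')
        exact ⟨hVY hzV, hzy⟩
  exact hy.1.2 ⟨⟨hy.1.1, heq ▸ hy'.1.1⟩, hWIS⟩
end

section
/- Let (X, ≤) be a partially ordered set, let f : X → X be progressive, let x₀ ∈ X, and let Y and Y' be Bourbaki f-towers based at x₀. If y is a limit element of Y, y' is a limit element of Y', and IS_Y(y) = IS_{Y'}(y'), then y = y'. -/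
theorem stmt9 {X : Type*} [PartialOrder X] (f : X → X) (hf : Progressive f) (x₀ : X)
    (Y Y' : Set X) (hY : BourbakiTower f x₀ Y) (hY' : BourbakiTower f x₀ Y')
    (y y' : X) (hy : IsLimitElem Y y) (hy' : IsLimitElem Y' y')
    (hIS : IS Y y = IS Y' y') :
    y = y' := by
  have h1 := hY.2.2.2 y hy
  have h2 := hY'.2.2.2 y' hy'
  rw [hIS] at h1
  exact h1.unique h2
end

section
/- Let (X, ≤) be a partially ordered set, let f : X → X be progressive, let x₀ ∈ X, and let Ω be the union of all Bourbaki f-towers based at x₀. Then the order induced from X is total on Ω, every nonempty subset of Ω has a least element, and x₀ is the least element of Ω; that is, Ω is well-ordered with least element x₀. -/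
namespace BWaux

variable {X : Type*} [PartialOrder X]

/-- common initial part of two towers -/
def Cset (A B : Set X) : Set X := {x | x ∈ A ∧ x ∈ B ∧ WIS A x = WIS B x}

lemma Cset_comm (A B : Set X) : Cset A B = Cset B A := by
  ext x
  constructor <;> rintro ⟨h1, h2, h3⟩ <;> exact ⟨h2, h1, h3.symm⟩

lemma Cset_subA {A B : Set X} {x : X} (h : x ∈ Cset A B) : x ∈ A := h.1
lemma Cset_subB {A B : Set X} {x : X} (h : x ∈ Cset A B) : x ∈ B := h.2.1

lemma Cset_down {A B : Set X} {x y : X} (hx : x ∈ Cset A B) (hy : y ∈ A)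
    (hyx : y ≤ x) : y ∈ Cset A B := by
  obtain ⟨hxA, hxB, hw⟩ := hx
  have hyB : y ∈ B := by
    have : y ∈ WIS A x := ⟨hy, hyx⟩
    rw [hw] at this
    exact this.1
  refine ⟨hy, hyB, ?_⟩
  ext z
  constructor
  · rintro ⟨hzA, hzy⟩
    have : z ∈ WIS A x := ⟨hzA, hzy.trans hyx⟩
    rw [hw] at this
    exact ⟨this.1, hzy⟩
  · rintro ⟨hzB, hzy⟩
    have : z ∈ WIS B x := ⟨hzB, hzy.trans hyx⟩
    rw [← hw] at this
    exact ⟨this.1, hzy⟩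

lemma Cset_down' {A B : Set X} {x y : X} (hx : x ∈ Cset A B) (hy : y ∈ B)
    (hyx : y ≤ x) : y ∈ Cset A B := by
  rw [Cset_comm]
  rw [Cset_comm] at hx
  exact Cset_down hx hy hyx

variable {f : X → X} {x₀ : X}

lemma x0_mem_Cset {A B : Set X} (hA : BourbakiTower f x₀ A) (hB : BourbakiTower f x₀ B) :
    x₀ ∈ Cset A B := by
  refine ⟨hA.2.1.1, hB.2.1.1, ?_⟩
  have hA0 := hA.2.1
  have hB0 := hB.2.1
  ext z
  constructor
  · rintro ⟨hz, hz0⟩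
    have : z = x₀ := le_antisymm hz0 (hA0.2 hz)
    exact ⟨this ▸ hB0.1, hz0⟩
  · rintro ⟨hz, hz0⟩
    have : z = x₀ := le_antisymm hz0 (hB0.2 hz)
    exact ⟨this ▸ hA0.1, hz0⟩

lemma C_eq_IS {A B : Set X} {a : X} (hA : BourbakiTower f x₀ A)
    (haC : IsLeast (A \ Cset A B) a) : Cset A B = IS A a := by
  ext x
  constructor
  · intro hx
    have hxA := hx.1
    rcases hA.1.1 x hxA a (haC.1.1) with h | h
    · refine ⟨hxA, lt_of_le_of_ne h ?_⟩
      rintro rfl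
      exact haC.1.2 hx
    · exact absurd (Cset_down hx haC.1.1 h) haC.1.2
  · rintro ⟨hxA, hxa⟩
    by_contra hxC
    exact absurd hxa (not_lt_of_ge (haC.2 ⟨hxA, hxC⟩))

/-- Successor case leads to contradiction. -/
lemma succ_case {A B : Set X} {a : X} (hA : BourbakiTower f x₀ A) (hB : BourbakiTower f x₀ B)
    (haC : IsLeast (A \ Cset A B) a) (hbne : (B \ Cset A B).Nonempty)
    (hsucc : IsSuccElem A a) : False := by
  obtain ⟨z, hzA, hza⟩ := hsucc
  have hCIS : Cset A B = IS A a := C_eq_IS hA haC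
  have hzlt : z < a := hza.1.2
  have hzC : z ∈ Cset A B := by rw [hCIS]; exact ⟨hzA, hzlt⟩
  have hzB : z ∈ B := hzC.2.1
  -- z is not greatest in B
  have hzngB : ¬ IsGreatest B z := by
    rintro ⟨_, hub⟩
    obtain ⟨b, hbB, hbC⟩ := hbne
    exact hbC (Cset_down' hzC hbB (hub hbB))
  have hzngA : ¬ IsGreatest A z := by
    rintro ⟨_, hub⟩
    exact absurd (hub haC.1.1) (not_le_of_gt hzlt)
  have hfA : IsLeast {w ∈ A | z < w} (f z) := hA.2.2.1 z hzA hzngA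
  have hfB : IsLeast {w ∈ B | z < w} (f z) := hB.2.2.1 z hzB hzngB
  have hafz : a = f z := hza.unique hfA
  have haB : a ∈ B := hafz ▸ hfB.1.1
  have haC' : a ∈ Cset A B := by
    refine ⟨haC.1.1, haB, ?_⟩
    ext w
    constructor
    · rintro ⟨hwA, hwa⟩
      rcases eq_or_lt_of_le hwa with rfl | hlt
      · exact ⟨haB, le_refl _⟩
      · have : w ∈ Cset A B := by rw [hCIS]; exact ⟨hwA, hlt⟩
        exact ⟨this.2.1, hwa⟩
    · rintro ⟨hwB, hwa⟩
      rcases eq_or_lt_of_le hwa with rfl | hlt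
      · exact ⟨haC.1.1, le_refl _⟩
      · -- w ∈ B, w < a = f z ⇒ w ≤ z
        have hwz : w ≤ z := by
          rcases hB.1.1 w hwB z hzB with h | h
          · exact h
          · rcases eq_or_lt_of_le h with rfl | h'
            · exact le_refl _
            · exact absurd (hafz ▸ hfB.2 ⟨hwB, h'⟩) (not_le_of_gt hlt)
        have : w ∈ Cset A B := Cset_down' hzC hwB hwz
        exact ⟨this.1, hwa⟩
  exact haC.1.2 haC'

/-- Comparability of towers. -/
lemma towers_comparable {A B : Set X} (hA : BourbakiTower f x₀ A)
    (hB : BourbakiTower f x₀ B) : IsInitialSegOf A B ∨ IsInitialSegOf B A := by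
  by_cases hAC : A ⊆ Cset A B
  · left
    refine ⟨fun x hx => (hAC hx).2.1, ?_⟩
    intro x hx y hy hyx
    have hxC := hAC hx
    exact (Cset_down' hxC hy hyx.le).1
  · by_cases hBC : B ⊆ Cset A B
    · right
      refine ⟨fun x hx => (hBC hx).1, ?_⟩
      intro x hx y hy hyx
      have hxC := hBC hx
      exact (Cset_down hxC hy hyx.le).2.1
    · exfalso
      obtain ⟨a0, ha0⟩ := Set.not_subset.1 hAC
      obtain ⟨b0, hb0⟩ := Set.not_subset.1 hBC
      obtain ⟨a, haC⟩ := hA.1.2 (A \ Cset A B) Set.diff_subset ⟨a0, ha0.1, ha0.2⟩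
      obtain ⟨b, hbC'⟩ := hB.1.2 (B \ Cset A B) Set.diff_subset ⟨b0, hb0.1, hb0.2⟩
      have hbC : IsLeast (B \ Cset B A) b := by rwa [Cset_comm] at hbC'
      have hbne : (B \ Cset A B).Nonempty := ⟨b0, hb0.1, hb0.2⟩
      have hane : (A \ Cset B A).Nonempty := by
        rw [Cset_comm]; exact ⟨a0, ha0.1, ha0.2⟩
      -- a is not least of A, not successor ⇒ limit
      have hx0C : x₀ ∈ Cset A B := x0_mem_Cset hA hB
      have haA : a ∈ A := haC.1.1
      have hbB : b ∈ B := hbC.1.1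
      have hansucc : ¬ IsSuccElem A a := fun h => succ_case hA hB haC hbne h
      have hbnsucc : ¬ IsSuccElem B b := fun h =>
        succ_case hB hA hbC hane h
      have hanleast : ¬ IsLeast A a := by
        intro h
        exact haC.1.2 (h.unique hA.2.1 ▸ hx0C)
      have hbnleast : ¬ IsLeast B b := by
        intro h
        have : b = x₀ := h.unique hB.2.1
        exact hbC.1.2 (this ▸ (Cset_comm A B ▸ hx0C))
      have halim : IsLimitElem A a := ⟨haA, hanleast, hansucc⟩
      have hblim : IsLimitElem B b := ⟨hbB, hbnleast, hbnsucc⟩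
      have hlubA : IsLUB (IS A a) a := hA.2.2.2 a halim
      have hlubB : IsLUB (IS B b) b := hB.2.2.2 b hblim
      have hCISa : Cset A B = IS A a := C_eq_IS hA haC
      have hCISb : Cset B A = IS B b := C_eq_IS hB hbC
      have hCC : Cset A B = Cset B A := Cset_comm A B
      have hab : a = b := by
        apply hlubA.unique
        rw [← hCISa, hCC, hCISb]
        exact hlubB
      have haCmem : a ∈ Cset A B := by
        refine ⟨haA, hab ▸ hbB, ?_⟩
        ext w
        constructor
        · rintro ⟨hwA, hwa⟩
          rcases eq_or_lt_of_le hwa with rfl | hlt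
          · exact ⟨hab ▸ hbB, le_refl _⟩
          · have : w ∈ Cset A B := by rw [hCISa]; exact ⟨hwA, hlt⟩
            exact ⟨this.2.1, hwa⟩
        · rintro ⟨hwB, hwa⟩
          rcases eq_or_lt_of_le hwa with rfl | hlt
          · exact ⟨haA, le_refl _⟩
          · have : w ∈ Cset B A := by rw [hCISb]; exact ⟨hwB, hab ▸ hlt⟩
            exact ⟨this.2.1, hwa⟩
      exact haC.1.2 haCmem

lemma singleton_tower (f : X → X) (x₀ : X) : BourbakiTower f x₀ {x₀} := by
  refine ⟨⟨?_, ?_⟩, ⟨rfl, fun y hy => le_of_eq hy.symm⟩, ?_, ?_⟩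
  · rintro a rfl b rfl; exact Or.inl le_rfl
  · intro S hS ⟨s, hs⟩
    have : s = x₀ := hS hs
    subst this
    exact ⟨s, hs, fun t ht => le_of_eq (hS ht).symm⟩
  · rintro y rfl hng
    exact absurd ⟨rfl, fun z hz => le_of_eq hz⟩ hng
  · rintro y ⟨rfl, hnl, _⟩
    exact absurd ⟨rfl, fun z hz => le_of_eq hz.symm⟩ hnl

end BWaux

theorem stmt10 {X : Type*} [PartialOrder X] (f : X → X) (hf : Progressive f) (x₀ : X) :
    IsWOSubset (⋃₀ {Y : Set X | BourbakiTower f x₀ Y}) ∧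
      IsLeast (⋃₀ {Y : Set X | BourbakiTower f x₀ Y}) x₀ := by
  constructor
  · constructor
    · rintro x ⟨A, hA, hxA⟩ y ⟨B, hB, hyB⟩
      rcases BWaux.towers_comparable hA hB with h | h
      · exact hB.1.1 x (h.1 hxA) y hyB
      · exact hA.1.1 x hxA y (h.1 hyB)
    · rintro S hS ⟨s, hs⟩
      obtain ⟨A, hA, hsA⟩ := hS hs
      obtain ⟨m, hm⟩ := hA.1.2 (S ∩ A) Set.inter_subset_right ⟨s, hs, hsA⟩
      refine ⟨m, hm.1.1, ?_⟩
      intro t ht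
      by_cases htA : t ∈ A
      · exact hm.2 ⟨ht, htA⟩
      · obtain ⟨B, hB, htB⟩ := hS ht
        rcases BWaux.towers_comparable hA hB with h | h
        · rcases hB.1.1 m (h.1 hm.1.2) t htB with hle | hle
          · exact hle
          · rcases eq_or_lt_of_le hle with rfl | hlt
            · exact le_rfl
            · exact absurd (h.2 m hm.1.2 t htB hlt) htA
        · exact absurd (h.1 htB) htA
  · constructor
    · exact ⟨{x₀}, BWaux.singleton_tower f x₀, rfl⟩
    · rintro t ⟨A, hA, htA⟩
      exact hA.2.1.2 htA
end

section
/- Let (X, ≤) be a partially ordered set, let f : X → X be progressive, let x₀ ∈ X, and let Ω be the union of all Bourbaki f-towers based at x₀. If y ∈ Ω is not the largest element of Ω, then f(y) ∈ Ω and f(y) is the least element of {u ∈ Ω : y < u}, i.e., succ_Ω(y) = f(y). -/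
section Aux

variable {X : Type*} [PartialOrder X] {f : X → X} {x₀ : X}

lemma seg_lt_iff {A D : Set X} (hA : BourbakiTower f x₀ A)
    (hD : IsInitialSegOf D A) {a : X} (ha : IsLeast (A \ D) a) :
    ∀ z ∈ A, (z < a ↔ z ∈ D) := by
  intro z hz
  constructor
  · intro hlt
    by_contra hzD
    exact absurd (ha.2 ⟨hz, hzD⟩) (not_le_of_gt hlt)
  · intro hzD
    rcases hA.1.1 z hz a ha.1.1 with h | h
    · rcases lt_or_eq_of_le h with h' | h'
      · exact h'
      · exact absurd (h' ▸ hzD) ha.1.2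
    · rcases lt_or_eq_of_le h with h' | h'
      · exact absurd (hD.2 z hzD a ha.1.1 h') ha.1.2
      · exact absurd (h' ▸ hzD) ha.1.2

lemma seg_empty {A D : Set X} (hA : BourbakiTower f x₀ A)
    (hD : IsInitialSegOf D A) {a : X} (ha : IsLeast (A \ D) a) (hDe : D = ∅) :
    a = x₀ := by
  have : IsLeast A a := by
    constructor
    · exact ha.1.1
    · intro z hz; exact ha.2 ⟨hz, by simp [hDe]⟩
  exact this.unique hA.2.1

lemma seg_succ {A D : Set X} (hA : BourbakiTower f x₀ A)
    (hD : IsInitialSegOf D A) {a : X} (ha : IsLeast (A \ D) a)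
    {d : X} (hd : IsGreatest D d) : a = f d := by
  have hdA : d ∈ A := hD.1 hd.1
  have hda : d < a := (seg_lt_iff hA hD ha d hdA).2 hd.1
  have hng : ¬ IsGreatest A d := fun h => absurd (h.2 ha.1.1) (not_le_of_gt hda)
  have hfd := hA.2.2.1 d hdA hng
  have : IsLeast {z ∈ A | d < z} a := by
    refine ⟨⟨ha.1.1, hda⟩, ?_⟩
    rintro z ⟨hzA, hdz⟩
    refine ha.2 ⟨hzA, fun hzD => ?_⟩
    exact absurd (hd.2 hzD) (not_le_of_gt hdz)
  exact this.unique hfd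

lemma seg_limit {A D : Set X} (hA : BourbakiTower f x₀ A)
    (hD : IsInitialSegOf D A) {a : X} (ha : IsLeast (A \ D) a)
    (hne : D.Nonempty) (hng : ¬ ∃ d, IsGreatest D d) : IsLUB D a := by
  have hlt := seg_lt_iff hA hD ha
  have hISD : IS A a = D := by
    ext z
    constructor
    · rintro ⟨hzA, hz⟩; exact (hlt z hzA).1 hz
    · intro hz; exact ⟨hD.1 hz, (hlt z (hD.1 hz)).2 hz⟩
  have hlim : IsLimitElem A a := by
    refine ⟨ha.1.1, ?_, ?_⟩
    · intro hL
      obtain ⟨d, hd⟩ := hne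
      exact absurd (hL.2 (hD.1 hd)) (not_le_of_gt ((hlt d (hD.1 hd)).2 hd))
    · rintro ⟨z, hzA, hzL⟩
      have hza : z < a := hzL.1.2
      have hzD : z ∈ D := (hlt z hzA).1 hza
      refine hng ⟨z, hzD, ?_⟩
      intro d hd
      have hdA : d ∈ A := hD.1 hd
      have hda : d < a := (hlt d hdA).2 hd
      by_contra hdz
      rcases hA.1.1 z (hD.1 hzD) d hdA with h | h
      · rcases lt_or_eq_of_le h with h' | h'
        · exact absurd (hzL.2 ⟨hdA, h'⟩) (not_le_of_gt hda)
        · exact hdz (le_of_eq h'.symm)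
      · exact hdz h
  have := hA.2.2.2 a hlim
  rwa [hISD] at this

lemma tower_comparable {A B : Set X} (hA : BourbakiTower f x₀ A)
    (hB : BourbakiTower f x₀ B) : A ⊆ B ∨ B ⊆ A := by
  classical
  set D : Set X := ⋃₀ {S | IsInitialSegOf S A ∧ IsInitialSegOf S B} with hDdef
  have hDA : IsInitialSegOf D A := by
    constructor
    · rintro x ⟨S, hS, hxS⟩; exact hS.1.1 hxS
    · rintro x ⟨S, hS, hxS⟩ b hbA hbx
      exact ⟨S, hS, hS.1.2 x hxS b hbA hbx⟩
  have hDB : IsInitialSegOf D B := by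
    constructor
    · rintro x ⟨S, hS, hxS⟩; exact hS.2.1 hxS
    · rintro x ⟨S, hS, hxS⟩ b hbB hbx
      exact ⟨S, hS, hS.2.2 x hxS b hbB hbx⟩
  by_cases hAD : A ⊆ D
  · exact Or.inl (hAD.trans hDB.1)
  by_cases hBD : B ⊆ D
  · exact Or.inr (hBD.trans hDA.1)
  exfalso
  have hAne : (A \ D).Nonempty := by
    rcases Set.not_subset.1 hAD with ⟨x, hx, hx'⟩; exact ⟨x, hx, hx'⟩
  have hBne : (B \ D).Nonempty := by
    rcases Set.not_subset.1 hBD with ⟨x, hx, hx'⟩; exact ⟨x, hx, hx'⟩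
  obtain ⟨a, ha⟩ := hA.1.2 (A \ D) (Set.diff_subset) hAne
  obtain ⟨b, hb⟩ := hB.1.2 (B \ D) (Set.diff_subset) hBne
  have hab : a = b := by
    rcases Set.eq_empty_or_nonempty D with hDe | hDne
    · rw [seg_empty hA hDA ha hDe, seg_empty hB hDB hb hDe]
    · by_cases hg : ∃ d, IsGreatest D d
      · obtain ⟨d, hd⟩ := hg
        rw [seg_succ hA hDA ha hd, seg_succ hB hDB hb hd]
      · exact (seg_limit hA hDA ha hDne hg).unique (seg_limit hB hDB hb hDne hg)
  have hD' : IsInitialSegOf (insert a D) A ∧ IsInitialSegOf (insert a D) B := by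
    constructor
    · constructor
      · rintro x (rfl | hx)
        · exact ha.1.1
        · exact hDA.1 hx
      · rintro x (rfl | hx) z hzA hzx
        · exact Or.inr ((seg_lt_iff hA hDA ha z hzA).1 hzx)
        · exact Or.inr (hDA.2 x hx z hzA hzx)
    · constructor
      · rintro x (rfl | hx)
        · exact hab ▸ hb.1.1
        · exact hDB.1 hx
      · rintro x (rfl | hx) z hzB hzx
        · exact Or.inr ((seg_lt_iff hB hDB hb z hzB).1 (hab ▸ hzx))
        · exact Or.inr (hDB.2 x hx z hzB hzx)
  have : a ∈ D := ⟨insert a D, hD', Or.inl rfl⟩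
  exact ha.1.2 this

end Aux

theorem stmt11 {X : Type*} [PartialOrder X] (f : X → X) (hf : Progressive f) (x₀ : X)
    (y : X) (hy : y ∈ ⋃₀ {Y : Set X | BourbakiTower f x₀ Y})
    (hny : ¬ IsGreatest (⋃₀ {Y : Set X | BourbakiTower f x₀ Y}) y) :
    f y ∈ ⋃₀ {Y : Set X | BourbakiTower f x₀ Y} ∧
      IsLeast {u ∈ ⋃₀ {Y : Set X | BourbakiTower f x₀ Y} | y < u} (f y) := by
  
  classical
  set Ω := ⋃₀ {Y : Set X | BourbakiTower f x₀ Y} with hΩ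
  obtain ⟨Y, hYt, hyY⟩ := hy
  -- find a tower containing y in which y is not greatest
  have key : ∀ u ∈ Ω, ¬ u ≤ y → ∃ Z, BourbakiTower f x₀ Z ∧ y ∈ Z ∧ u ∈ Z := by
    intro u hu hule
    obtain ⟨W, hWt, huW⟩ := hu
    rcases tower_comparable hYt hWt with h | h
    · exact ⟨W, hWt, h hyY, huW⟩
    · exact ⟨Y, hYt, hyY, h huW⟩
  obtain ⟨u, hu, hule⟩ : ∃ u ∈ Ω, ¬ u ≤ y := by
    by_contra h
    push_neg at h
    exact hny ⟨⟨Y, hYt, hyY⟩, h⟩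
  obtain ⟨Z, hZt, hyZ, huZ⟩ := key u hu hule
  have hyng : ¬ IsGreatest Z y := fun h => hule (h.2 huZ)
  have hfy := hZt.2.2.1 y hyZ hyng
  have hfyΩ : f y ∈ Ω := ⟨Z, hZt, hfy.1.1⟩
  refine ⟨hfyΩ, ⟨⟨hfyΩ, hfy.1.2⟩, ?_⟩⟩
  rintro v ⟨hvΩ, hyv⟩
  obtain ⟨Z', hZ't, hyZ', hvZ'⟩ := key v hvΩ (not_le_of_gt hyv)
  have hyng' : ¬ IsGreatest Z' y := fun h => absurd (h.2 hvZ') (not_le_of_gt hyv)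
  exact (hZ't.2.2.1 y hyZ' hyng').2 ⟨hvZ', hyv⟩
end

section
/- Let (X, ≤) be a partially ordered set, let f : X → X be progressive, let x₀ ∈ X, and let Ω be the union of all Bourbaki f-towers based at x₀. If y is a limit element of Ω and Y is any Bourbaki f-tower based at x₀ with y ∈ Y, then y is a limit element of Y and IS_Ω(y) = IS_Y(y). -/
lemma tower_cmp {X : Type*} [PartialOrder X] {f : X → X} {x₀ : X}
    {Y Z : Set X} (hY : BourbakiTower f x₀ Y) (hZ : BourbakiTower f x₀ Z) :
    ∀ y ∈ Y, Z ⊆ WIS Y y ∨ (y ∈ Z ∧ IS Z y = IS Y y) := by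
  obtain ⟨⟨hYtot, hYwo⟩, hYx₀, hYsucc, hYlim⟩ := hY
  obtain ⟨⟨hZtot, hZwo⟩, hZx₀, hZsucc, hZlim⟩ := hZ
  by_contra hcon
  push_neg at hcon
  obtain ⟨y₀, hy₀Y, hy₀⟩ := hcon
  obtain ⟨m, hm⟩ := hYwo {y ∈ Y | ¬(Z ⊆ WIS Y y ∨ (y ∈ Z ∧ IS Z y = IS Y y))}
    (fun a ha => ha.1) ⟨y₀, hy₀Y, by tauto⟩
  have hmY : m ∈ Y := hm.1.1
  have IH : ∀ z ∈ Y, z < m → (Z ⊆ WIS Y z ∨ (z ∈ Z ∧ IS Z z = IS Y z)) := by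
    intro z hz hzm
    by_contra h
    exact absurd (hm.2 ⟨hz, h⟩) (hzm.not_ge)
  apply hm.1.2
  by_cases hleast : IsLeast Y m
  · have hmx : m = x₀ := hleast.unique hYx₀
    right
    refine ⟨hmx ▸ hZx₀.1, ?_⟩
    ext w
    constructor
    · rintro ⟨hwZ, hwm⟩
      exact absurd (hmx ▸ hZx₀.2 hwZ) (hwm.not_ge)
    · rintro ⟨hwY, hwm⟩
      exact absurd (hleast.2 hwY) (hwm.not_ge)
  by_cases hsucc : IsSuccElem Y m
  · obtain ⟨z, hzY, hls⟩ := hsucc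
    have hzm : z < m := hls.1.2
    rcases IH z hzY hzm with hsub | ⟨hzZ, hIS⟩
    · left
      intro w hw
      obtain ⟨hwY, hwz⟩ := hsub hw
      exact ⟨hwY, hwz.trans hzm.le⟩
    · -- m = f z
      have hng : ¬ IsGreatest Y z := fun hg => absurd (hg.2 hmY) (hzm.not_ge)
      have hmfz : m = f z := hls.unique (hYsucc z hzY hng)
      by_cases hzg : IsGreatest Z z
      · left
        intro w hwZ
        have hwz : w ≤ z := hzg.2 hwZ
        rcases eq_or_lt_of_le hwz with rfl | hwz'
        · exact ⟨hzY, hzm.le⟩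
        · have : w ∈ IS Y z := hIS ▸ (⟨hwZ, hwz'⟩ : w ∈ IS Z z)
          exact ⟨this.1, this.2.le.trans hzm.le⟩
      · right
        have hlsZ : IsLeast {w ∈ Z | z < w} (f z) := hZsucc z hzZ hzg
        have hmZ : m ∈ Z := hmfz ▸ hlsZ.1.1
        refine ⟨hmZ, ?_⟩
        have key : ∀ w, (w ∈ IS Z m ↔ w = z ∨ w ∈ IS Z z) := by
          intro w
          constructor
          · rintro ⟨hwZ, hwm⟩
            rcases hZtot w hwZ z hzZ with h | h
            · rcases eq_or_lt_of_le h with rfl | h'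
              · exact Or.inl rfl
              · exact Or.inr ⟨hwZ, h'⟩
            · rcases eq_or_lt_of_le h with rfl | h'
              · exact Or.inl rfl
              · exact absurd (hmfz ▸ hlsZ.2 ⟨hwZ, h'⟩) (hwm.not_ge)
          · rintro (rfl | ⟨hwZ, hwz⟩)
            · exact ⟨hzZ, hzm⟩
            · exact ⟨hwZ, hwz.trans hzm⟩
        have keyY : ∀ w, (w ∈ IS Y m ↔ w = z ∨ w ∈ IS Y z) := by
          intro w
          constructor
          · rintro ⟨hwY, hwm⟩
            rcases hYtot w hwY z hzY with h | h
            · rcases eq_or_lt_of_le h with rfl | h'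
              · exact Or.inl rfl
              · exact Or.inr ⟨hwY, h'⟩
            · rcases eq_or_lt_of_le h with rfl | h'
              · exact Or.inl rfl
              · exact absurd (hls.2 ⟨hwY, h'⟩) (hwm.not_ge)
          · rintro (rfl | ⟨hwY, hwz⟩)
            · exact ⟨hzY, hzm⟩
            · exact ⟨hwY, hwz.trans hzm⟩
        ext w
        rw [key w, keyY w, hIS]
  · -- limit case
    have hlub : IsLUB (IS Y m) m := hYlim m ⟨hmY, hleast, hsucc⟩
    by_cases hex : ∃ z ∈ Y, z < m ∧ Z ⊆ WIS Y z
    · left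
      obtain ⟨z, hzY, hzm, hsub⟩ := hex
      intro w hw
      obtain ⟨hwY, hwz⟩ := hsub hw
      exact ⟨hwY, hwz.trans hzm.le⟩
    · push_neg at hex
      have hall : ∀ z ∈ IS Y m, z ∈ Z ∧ IS Z z = IS Y z := by
        rintro z ⟨hzY, hzm⟩
        rcases IH z hzY hzm with h | h
        · exact absurd h (hex z hzY hzm)
        · exact h
      by_cases hT : (Z \ IS Y m).Nonempty
      · obtain ⟨p, hp⟩ := hZwo (Z \ IS Y m) Set.diff_subset hT
        have hpZ : p ∈ Z := hp.1.1
        have hIS_eq : IS Z p = IS Y m := by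
          ext w
          constructor
          · rintro ⟨hwZ, hwp⟩
            by_contra hw
            exact absurd (hp.2 ⟨hwZ, hw⟩) (hwp.not_ge)
          · intro hw
            have hwZ : w ∈ Z := (hall w hw).1
            refine ⟨hwZ, ?_⟩
            rcases hZtot p hpZ w hwZ with h | h
            · rcases eq_or_lt_of_le h with rfl | h'
              · exact absurd hw hp.1.2
              · have : p ∈ IS Y w := (hall w hw).2 ▸ (⟨hpZ, h'⟩ : p ∈ IS Z w)
                exact absurd (⟨this.1, this.2.trans hw.2⟩ : p ∈ IS Y m) hp.1.2
            · rcases eq_or_lt_of_le h with rfl | h'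
              · exact absurd hw hp.1.2
              · exact h'
        have hmp : m ≤ p := hlub.2 (fun w hw => (hIS_eq ▸ hw : w ∈ IS Z p).2.le)
        -- x₀ ∈ IS Y m
        have hx₀m : x₀ ∈ IS Y m := by
          refine ⟨hYx₀.1, lt_of_le_of_ne (hYx₀.2 hmY) ?_⟩
          intro h
          exact hleast (h ▸ hYx₀)
        have hpnl : ¬ IsLeast Z p := by
          intro h
          have : x₀ ∈ IS Z p := hIS_eq ▸ hx₀m
          exact absurd (h.2 hZx₀.1) (this.2.not_ge)
        have hpm : p = m := by
          by_cases hps : IsSuccElem Z p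
          · obtain ⟨z', hz'Z, hls'⟩ := hps
            have hz'p : z' < p := hls'.1.2
            have hz'm : z' ∈ IS Y m := hIS_eq ▸ (⟨hz'Z, hz'p⟩ : z' ∈ IS Z p)
            have hngY : ¬ IsGreatest Y z' := fun hg => absurd (hg.2 hmY) (hz'm.2.not_ge)
            have hngZ : ¬ IsGreatest Z z' := fun hg => absurd (hg.2 hpZ) (hz'p.not_ge)
            have hpfz : p = f z' := hls'.unique (hZsucc z' hz'Z hngZ)
            have : f z' ≤ m := (hYsucc z' hz'm.1 hngY).2 ⟨hmY, hz'm.2⟩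
            exact le_antisymm (hpfz ▸ this) hmp
          · have : IsLUB (IS Z p) p := hZlim p ⟨hpZ, hpnl, hps⟩
            exact (hIS_eq ▸ this).unique hlub
        right
        exact ⟨hpm ▸ hpZ, hpm ▸ hIS_eq⟩
      · left
        rw [Set.not_nonempty_iff_eq_empty, Set.diff_eq_empty] at hT
        intro w hw
        obtain ⟨hwY, hwm⟩ := hT hw
        exact ⟨hwY, hwm.le⟩

theorem stmt13 {X : Type*} [PartialOrder X] (f : X → X) (hf : Progressive f) (x₀ : X)
    (y : X) (hy : IsLimitElem (⋃₀ {Y : Set X | BourbakiTower f x₀ Y}) y)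
    (Y : Set X) (hY : BourbakiTower f x₀ Y) (hyY : y ∈ Y) :
    IsLimitElem Y y ∧ IS (⋃₀ {Y : Set X | BourbakiTower f x₀ Y}) y = IS Y y := by
  obtain ⟨hyΩ, hnl, hns⟩ := hy
  have hyΩ' : y ∈ ⋃₀ {Y : Set X | BourbakiTower f x₀ Y} := ⟨Y, hY, hyY⟩
  constructor
  · refine ⟨hyY, ?_, ?_⟩
    · intro h
      apply hnl
      have hyx : y = x₀ := h.unique hY.2.1
      refine ⟨hyΩ', ?_⟩
      rintro w ⟨Z, hZ, hwZ⟩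
      exact hyx ▸ hZ.2.1.2 hwZ
    · rintro ⟨z, hzY, hls⟩
      apply hns
      refine ⟨z, ⟨Y, hY, hzY⟩, ⟨hyΩ', hls.1.2⟩, ?_⟩
      rintro w ⟨⟨Z, hZ, hwZ⟩, hzw⟩
      rcases tower_cmp hY hZ y hyY with hsub | ⟨hyZ, hIS⟩
      · obtain ⟨hwY, hwy⟩ := hsub hwZ
        exact hls.2 ⟨hwY, hzw⟩
      · rcases hZ.1.1 w hwZ y hyZ with h | h
        · rcases eq_or_lt_of_le h with rfl | h'
          · exact le_refl w
          · have : w ∈ IS Y y := hIS ▸ (⟨hwZ, h'⟩ : w ∈ IS Z y)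
            exact absurd (hls.2 ⟨this.1, hzw⟩) h'.not_ge
        · exact h
  · ext w
    constructor
    · rintro ⟨⟨Z, hZ, hwZ⟩, hwy⟩
      rcases tower_cmp hY hZ y hyY with hsub | ⟨hyZ, hIS⟩
      · exact ⟨(hsub hwZ).1, hwy⟩
      · exact hIS ▸ (⟨hwZ, hwy⟩ : w ∈ IS Z y)
    · rintro ⟨hwY, hwy⟩
      exact ⟨⟨Y, hY, hwY⟩, hwy⟩
end

section
/- Let (X, ≤) be a partially ordered set, let f : X → X be progressive, let x₀ ∈ X, and let Ω be a Bourbaki f-tower based at x₀ that has no largest element. Suppose ω = lub_X(Ω) exists and ω ∉ Ω. Then Ω ∪ {ω} is a Bourbaki f-tower based at x₀ in which ω is the largest element and a limit element. -/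
theorem stmt14 {X : Type*} [PartialOrder X] (f : X → X) (hf : Progressive f) (x₀ : X)
    (Ω : Set X) (hΩ : BourbakiTower f x₀ Ω) (hng : ¬ ∃ g, IsGreatest Ω g)
    (ω : X) (hω : IsLUB Ω ω) (hωΩ : ω ∉ Ω) :
    BourbakiTower f x₀ (Ω ∪ {ω}) ∧ IsGreatest (Ω ∪ {ω}) ω ∧
      IsLimitElem (Ω ∪ {ω}) ω := by
  obtain ⟨⟨htot, hwo⟩, hx0, hsucc, hlim⟩ := hΩ
  have hlt : ∀ y ∈ Ω, y < ω := fun y hy =>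
    lt_of_le_of_ne (hω.1 hy) (by rintro rfl; exact hωΩ hy)
  have hgr : IsGreatest (Ω ∪ {ω}) ω := by
    constructor
    · exact Or.inr rfl
    · rintro z (hz | rfl)
      · exact hω.1 hz
      · exact le_rfl
  have hnotsucc : ¬ IsSuccElem (Ω ∪ {ω}) ω := by
    rintro ⟨z, hz, hleast⟩
    rcases hz with hz | rfl
    · have hzng : ¬ IsGreatest Ω z := fun h => hng ⟨z, h⟩
      have hfz := hsucc z hz hzng
      have : ω ≤ f z := hleast.2 ⟨Or.inl hfz.1.1, hfz.1.2⟩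
      exact absurd (this.trans_lt (hlt _ hfz.1.1)) (lt_irrefl ω)
    · exact absurd hleast.1.2 (lt_irrefl _)
  have hislim : IsLimitElem (Ω ∪ {ω}) ω := by
    refine ⟨Or.inr rfl, ?_, hnotsucc⟩
    rintro hl
    have := hl.2 (Or.inl hx0.1)
    exact hωΩ (le_antisymm this (hω.1 hx0.1) ▸ hx0.1)
  have hISeq : IS (Ω ∪ {ω}) ω = Ω := by
    ext z
    constructor
    · rintro ⟨hz | rfl, hlt'⟩
      · exact hz
      · exact absurd hlt' (lt_irrefl _)
    · exact fun hz => ⟨Or.inl hz, hlt z hz⟩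
  refine ⟨⟨⟨?_, ?_⟩, ?_, ?_, ?_⟩, hgr, hislim⟩
  · rintro a (ha | rfl) b (hb | rfl)
    · exact htot a ha b hb
    · exact Or.inl (hω.1 ha)
    · exact Or.inr (hω.1 hb)
    · exact Or.inl le_rfl
  · intro S hS hSne
    by_cases h : (S ∩ Ω).Nonempty
    · obtain ⟨m, hm⟩ := hwo (S ∩ Ω) (fun x hx => hx.2) h
      refine ⟨m, hm.1.1, fun z hz => ?_⟩
      rcases hS hz with hz' | rfl
      · exact hm.2 ⟨hz, hz'⟩
      · exact hω.1 hm.1.2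
    · refine ⟨ω, ?_, ?_⟩
      · obtain ⟨s, hs⟩ := hSne
        rcases hS hs with hs' | rfl
        · exact absurd ⟨s, hs, hs'⟩ h
        · exact hs
      · intro z hz
        rcases hS hz with hz' | rfl
        · exact absurd ⟨z, hz, hz'⟩ h
        · exact le_rfl
  · exact ⟨Or.inl hx0.1, by rintro z (hz | rfl); exacts [hx0.2 hz, hω.1 hx0.1]⟩
  · rintro y (hy | rfl) hyng
    · have hfz := hsucc y hy (fun h => hng ⟨y, h⟩)
      refine ⟨⟨Or.inl hfz.1.1, hfz.1.2⟩, ?_⟩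
      rintro z ⟨hz | rfl, hlt'⟩
      · exact hfz.2 ⟨hz, hlt'⟩
      · exact hω.1 hfz.1.1
    · exact absurd hgr hyng
  · intro y hy
    rcases hy.1 with hyΩ | rfl
    · have hyωlt := hlt y hyΩ
      have hISeq2 : IS (Ω ∪ {ω}) y = IS Ω y := by
        ext z
        constructor
        · rintro ⟨hz | rfl, hlt'⟩
          · exact ⟨hz, hlt'⟩
          · exact absurd (hlt'.trans hyωlt) (lt_irrefl _)
        · exact fun hz => ⟨Or.inl hz.1, hz.2⟩
      rw [hISeq2]
      refine hlim y ⟨hyΩ, ?_, ?_⟩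
      · intro h
        exact hy.2.1 ⟨Or.inl h.1, by rintro z (hz | rfl); exacts [h.2 hz, hyωlt.le]⟩
      · rintro ⟨z, hz, hleast⟩
        refine hy.2.2 ⟨z, Or.inl hz, ⟨Or.inl hleast.1.1, hleast.1.2⟩, ?_⟩
        rintro w ⟨hw | rfl, hlt'⟩
        · exact hleast.2 ⟨hw, hlt'⟩
        · exact hyωlt.le
    · rw [hISeq]; exact hω
end

section
/- Let (X, ≤) be a partially ordered set, let f : X → X be progressive, let x₀ ∈ X, and let Ω be a Bourbaki f-tower based at x₀ whose largest element is ω. If ω < f(ω), then Ω ∪ {f(ω)} is a Bourbaki f-tower based at x₀ in which f(ω) is the largest element and the successor of ω. -/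
theorem stmt15 {X : Type*} [PartialOrder X] (f : X → X) (hf : Progressive f) (x₀ : X)
    (Ω : Set X) (hΩ : BourbakiTower f x₀ Ω) (ω : X) (hω : IsGreatest Ω ω)
    (hlt : ω < f ω) :
    BourbakiTower f x₀ (Ω ∪ {f ω}) ∧ IsGreatest (Ω ∪ {f ω}) (f ω) ∧
      IsLeast {z ∈ Ω ∪ {f ω} | ω < z} (f ω) := by
  obtain ⟨⟨htot, hwo⟩, hx₀, hsucc, hlim⟩ := hΩ
  have hle : ∀ y ∈ Ω, y ≤ f ω := fun y hy => (hω.2 hy).trans hlt.le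
  have hle' : ∀ y ∈ Ω ∪ {f ω}, y ≤ f ω := by
    rintro y (hy | rfl)
    · exact hle y hy
    · exact le_rfl
  have hgr : IsGreatest (Ω ∪ {f ω}) (f ω) := ⟨Or.inr rfl, hle'⟩
  have hsuccω : IsLeast {z ∈ Ω ∪ {f ω} | ω < z} (f ω) := by
    refine ⟨⟨Or.inr rfl, hlt⟩, ?_⟩
    rintro z ⟨hz | rfl, hωz⟩
    · exact absurd (hω.2 hz) hωz.not_ge
    · exact le_rfl
  refine ⟨⟨⟨?_, ?_⟩, ⟨Or.inl hx₀.1, ?_⟩, ?_, ?_⟩, hgr, hsuccω⟩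
  · rintro a (ha | rfl) b (hb | rfl)
    · exact htot a ha b hb
    · exact Or.inl (hle a ha)
    · exact Or.inr (hle b hb)
    · exact Or.inl le_rfl
  · intro S hS hSne
    by_cases hSΩ : (S ∩ Ω).Nonempty
    · obtain ⟨m, hm⟩ := hwo (S ∩ Ω) (Set.inter_subset_right) hSΩ
      refine ⟨m, hm.1.1, fun z hz => ?_⟩
      rcases hS hz with hz' | rfl
      · exact hm.2 ⟨hz, hz'⟩
      · exact hle m hm.1.2
    · refine ⟨f ω, ?_, fun z hz => ?_⟩
      · obtain ⟨s, hs⟩ := hSne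
        rcases hS hs with hs' | rfl
        · exact absurd ⟨s, hs, hs'⟩ hSΩ
        · exact hs
      · rcases hS hz with hz' | rfl
        · exact absurd ⟨z, hz, hz'⟩ hSΩ
        · exact le_rfl
  · rintro y (hy | rfl)
    · exact hx₀.2 hy
    · exact (hx₀.2 hω.1).trans hlt.le
  · rintro y (hy | rfl)
    · rintro hng
      by_cases hyω : y = ω
      · subst hyω
        exact hsuccω
      · have hns : ¬ IsGreatest Ω y := fun h =>
          hyω (le_antisymm (hω.2 h.1) (h.2 hω.1))
        obtain ⟨⟨hfy, hyfy⟩, hlb⟩ := hsucc y hy hns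
        refine ⟨⟨Or.inl hfy, hyfy⟩, ?_⟩
        rintro z ⟨hz | rfl, hyz⟩
        · exact hlb ⟨hz, hyz⟩
        · exact hle (f y) hfy
    · intro hng
      exact absurd hgr hng
  · rintro y ⟨hy | rfl, hnl, hns⟩
    · have hyΩlim : IsLimitElem Ω y := by
        refine ⟨hy, fun h => hnl ⟨Or.inl h.1, ?_⟩, fun ⟨z, hz, hzl⟩ => hns ⟨z, Or.inl hz, ⟨Or.inl hzl.1.1, hzl.1.2⟩, ?_⟩⟩
        · rintro z (hz | rfl)
          · exact h.2 hz
          · exact (h.2 hω.1).trans hlt.le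
        · rintro w ⟨hw | rfl, hzw⟩
          · exact hzl.2 ⟨hw, hzw⟩
          · exact hle y hy
      have heq : IS (Ω ∪ {f ω}) y = IS Ω y := by
        ext z
        constructor
        · rintro ⟨hz | rfl, hzy⟩
          · exact ⟨hz, hzy⟩
          · exact absurd (hzy.trans_le (hle y hy)) (lt_irrefl _)
        · rintro ⟨hz, hzy⟩
          exact ⟨Or.inl hz, hzy⟩
      rw [heq]
      exact hlim y hyΩlim
    · exact absurd ⟨ω, Or.inl hω.1, hsuccω.1, fun w hw => hsuccω.2 hw⟩ hns
end

section
/- Let (X, ≤) be a partially ordered set, let f : X → X be progressive, let x₀ ∈ X, and let Y and Y' be Bourbaki f-towers based at x₀. Then the union Y ∪ Y' is a chain in X, i.e., any two elements of Y ∪ Y' are comparable. -/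
theorem tower_key {X : Type*} [PartialOrder X] (f : X → X) (x₀ : X)
    (Y Y' : Set X) (hY : BourbakiTower f x₀ Y) (hY' : BourbakiTower f x₀ Y') :
    ∀ y ∈ Y, (y ∈ Y' ∧ IS Y y = IS Y' y) ∨ Y' ⊆ IS Y y := by
  obtain ⟨⟨htotY, hwoY⟩, hminY, hsuccY, hlimY⟩ := hY
  obtain ⟨⟨htotY', hwoY'⟩, hminY', hsuccY', hlimY'⟩ := hY'
  by_contra hcon
  push_neg at hcon
  obtain ⟨y0, hy0Y, hy0⟩ := hcon
  have hSne : ({y ∈ Y | ¬ ((y ∈ Y' ∧ IS Y y = IS Y' y) ∨ Y' ⊆ IS Y y)} : Set X).Nonempty := by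
    exact ⟨y0, hy0Y, by tauto⟩
  obtain ⟨m, hmS, hmlb⟩ := hwoY _ (fun z hz => hz.1) hSne
  have hmY : m ∈ Y := hmS.1
  have hIH : ∀ z ∈ Y, z < m → (z ∈ Y' ∧ IS Y z = IS Y' z) ∨ Y' ⊆ IS Y z := by
    intro z hzY hzm
    by_contra hz
    exact absurd (hmlb ⟨hzY, hz⟩) (not_le_of_gt hzm)
  apply hmS.2
  by_cases hA : ∃ z ∈ Y, z < m ∧ Y' ⊆ IS Y z
  · obtain ⟨z, hzY, hzm, hzsub⟩ := hA
    right
    intro w hw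
    obtain ⟨hwY, hwz⟩ := hzsub hw
    exact ⟨hwY, hwz.trans hzm⟩
  · push_neg at hA
    have hIH' : ∀ z ∈ Y, z < m → z ∈ Y' ∧ IS Y z = IS Y' z := by
      intro z hzY hzm
      rcases hIH z hzY hzm with h | h
      · exact h
      · exact absurd h (hA z hzY hzm)
    have hsub : IS Y m ⊆ Y' := fun z hz => (hIH' z hz.1 hz.2).1
    have hinit : ∀ w ∈ Y', ∀ z, z ∈ IS Y m → w < z → w ∈ IS Y m := by
      intro w hw z hz hwz
      have h2 := (hIH' z hz.1 hz.2).2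
      have : w ∈ IS Y' z := ⟨hw, hwz⟩
      rw [← h2] at this
      exact ⟨this.1, this.2.trans hz.2⟩
    by_cases hL : IsLeast Y m
    · left
      have hmx : m = x₀ := hL.unique hminY
      subst hmx
      refine ⟨hminY'.1, ?_⟩
      ext z
      constructor
      · rintro ⟨hz, hlt⟩; exact absurd (hminY.2 hz) (not_le_of_gt hlt)
      · rintro ⟨hz, hlt⟩; exact absurd (hminY'.2 hz) (not_le_of_gt hlt)
    by_cases hS : IsSuccElem Y m
    · obtain ⟨z, hzY, hzLeast⟩ := hS
      have hzm : z < m := hzLeast.1.2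
      have hng : ¬ IsGreatest Y z := fun hg => absurd (hg.2 hmY) (not_le_of_gt hzm)
      have hm : m = f z := hzLeast.unique (hsuccY z hzY hng)
      obtain ⟨hzY', hISz⟩ := hIH' z hzY hzm
      by_cases hg' : IsGreatest Y' z
      · right
        intro w hw
        have hwz : w ≤ z := hg'.2 hw
        rcases eq_or_lt_of_le hwz with h | h
        · subst h; exact ⟨hzY, hzm⟩
        · have : w ∈ IS Y z := by rw [hISz]; exact ⟨hw, h⟩
          exact ⟨this.1, this.2.trans hzm⟩
      · have hfz' := hsuccY' z hzY' hg'
        rw [← hm] at hfz'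
        left
        refine ⟨hfz'.1.1, ?_⟩
        ext w
        constructor
        · rintro ⟨hwY, hwm⟩; exact ⟨hsub ⟨hwY, hwm⟩, hwm⟩
        · rintro ⟨hwY', hwm⟩
          have hnzw : ¬ z < w := fun h => absurd (hfz'.2 ⟨hwY', h⟩) (not_le_of_gt hwm)
          have hwz : w ≤ z := by
            rcases htotY' w hwY' z hzY' with h | h
            · exact h
            · exact le_of_eq ((eq_of_le_of_not_lt h hnzw).symm)
          rcases eq_or_lt_of_le hwz with h | h
          · subst h; exact ⟨hzY, hzm⟩
          · have : w ∈ IS Y z := by rw [hISz]; exact ⟨hwY', h⟩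
            exact ⟨this.1, this.2.trans hzm⟩
    · -- limit case
      have hlub : IsLUB (IS Y m) m := hlimY m ⟨hmY, hL, hS⟩
      by_cases hsub2 : Y' ⊆ IS Y m
      · right; exact hsub2
      · have hTne : ({w ∈ Y' | w ∉ IS Y m} : Set X).Nonempty := by
          rcases Set.not_subset.mp hsub2 with ⟨w, hw, hw2⟩
          exact ⟨w, hw, hw2⟩
        obtain ⟨t, htT, htlb⟩ := hwoY' _ (fun z hz => hz.1) hTne
        have htY' : t ∈ Y' := htT.1
        have hISt : IS Y' t = IS Y m := by
          ext z
          constructor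
          · rintro ⟨hzY', hzt⟩
            by_contra hzn
            exact absurd (htlb ⟨hzY', hzn⟩) (not_le_of_gt hzt)
          · intro hz
            have hzY' : z ∈ Y' := hsub hz
            rcases htotY' z hzY' t htY' with h | h
            · rcases eq_or_lt_of_le h with h | h
              · exact absurd (h ▸ hz) htT.2
              · exact ⟨hzY', h⟩
            · rcases eq_or_lt_of_le h with h | h
              · exact absurd (h ▸ hz) htT.2
              · exact absurd (hinit t htY' z hz h) htT.2
        have hmt : m ≤ t := by
          apply hlub.2
          intro z hz
          rw [← hISt] at hz
          exact le_of_lt hz.2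
        by_cases hLt : IsLeast Y' t
        · exfalso
          have htx : t = x₀ := hLt.unique hminY'
          have : x₀ ≤ m := hminY.2 hmY
          have : m = x₀ := le_antisymm (htx ▸ hmt) this
          exact hL (this ▸ hminY)
        by_cases hSt : IsSuccElem Y' t
        · obtain ⟨z', hz'Y', hz'least⟩ := hSt
          have hz't : z' < t := hz'least.1.2
          have hz'IS : z' ∈ IS Y m := by rw [← hISt]; exact ⟨hz'Y', hz't⟩
          have hz'Y : z' ∈ Y := hz'IS.1
          have hng : ¬ IsGreatest Y z' := fun hg => absurd (hg.2 hmY) (not_le_of_gt hz'IS.2)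
          have hng' : ¬ IsGreatest Y' z' := fun hg => absurd (hg.2 htY') (not_le_of_gt hz't)
          have ht : t = f z' := hz'least.unique (hsuccY' z' hz'Y' hng')
          have hfz : IsLeast {w ∈ Y | z' < w} (f z') := hsuccY z' hz'Y hng
          have htm : t ≤ m := ht ▸ hfz.2 ⟨hmY, hz'IS.2⟩
          have : t = m := le_antisymm htm hmt
          subst this
          left
          exact ⟨htY', hISt.symm⟩
        · have hlub' : IsLUB (IS Y' t) t := hlimY' t ⟨htY', hLt, hSt⟩
          rw [hISt] at hlub'
          have : t = m := hlub'.unique hlub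
          subst this
          left
          exact ⟨htY', hISt.symm⟩

theorem stmt17 {X : Type*} [PartialOrder X] (f : X → X) (hf : Progressive f) (x₀ : X)
    (Y Y' : Set X) (hY : BourbakiTower f x₀ Y) (hY' : BourbakiTower f x₀ Y') :
    ∀ a ∈ Y ∪ Y', ∀ b ∈ Y ∪ Y', a ≤ b ∨ b ≤ a := by
  have mixed : ∀ Z Z' : Set X, BourbakiTower f x₀ Z → BourbakiTower f x₀ Z' →
      ∀ a ∈ Z, ∀ b ∈ Z', a ≤ b ∨ b ≤ a := by
    intro Z Z' hZ hZ' a ha b hb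
    rcases tower_key f x₀ Z Z' hZ hZ' a ha with ⟨haZ', _⟩ | hsub
    · exact hZ'.1.1 a haZ' b hb
    · exact Or.inr (le_of_lt (hsub hb).2)
  rintro a (ha | ha) b (hb | hb)
  · exact hY.1.1 a ha b hb
  · exact mixed Y Y' hY hY' a ha b hb
  · exact (mixed Y Y' hY hY' b hb a ha).symm
  · exact hY'.1.1 a ha b hb
end
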